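/- arXiv:2012.04553 — 4 statements merged into one kernel-verified Lean document; each statement's English description precedes it below -/
import Mathlib

section
/- Let V and W be finite types, let p be a simple graph on V (the pattern), and let G be a simple graph on W (the data graph). Then the set of edge-induced matches of p in G equals the union of the set of vertex-induced matches of p in G together with, over all simple graphs q on V that are strict supergraphs of p (i.e. p < q in the edge-inclusion order), the sets { m ∘ f | m is a vertex-induced match of q in G and f is a subgraph isomorphism from p to q }. (Match Conversion Theorem.) -/
/-- The set of edge-induced matches of pattern `p` in data graph `G`:
injective maps preserving adjacency. -/
def EdgeInduced {V W : Type*} (p : SimpleGraph V) (G : SimpleGraph W) : Set (V → W) :=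
  {m | Function.Injective m ∧ ∀ u v, p.Adj u v → G.Adj (m u) (m v)}

/-- The set of vertex-induced matches of pattern `p` in data graph `G`:
injective maps reflecting adjacency exactly. -/
def VertexInduced {V W : Type*} (p : SimpleGraph V) (G : SimpleGraph W) : Set (V → W) :=
  {m | Function.Injective m ∧ ∀ u v, p.Adj u v ↔ G.Adj (m u) (m v)}

/-- The set `Φ(p,q)` of subgraph isomorphisms from `p` to `q`:
permutations of the vertex set mapping edges of `p` to edges of `q`. -/
def SubIso {V : Type*} (p q : SimpleGraph V) : Set (Equiv.Perm V) :=
  {f | ∀ u v, p.Adj u v → q.Adj (f u) (f v)}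

/-- `M ∘ F = { m ∘ f | m ∈ M, f ∈ F }`. -/
def CompSet {V W : Type*} (M : Set (V → W)) (F : Set (Equiv.Perm V)) : Set (V → W) :=
  {x | ∃ m ∈ M, ∃ f ∈ F, x = m ∘ f}

/-- The set `Aut(q)` of automorphisms of `q`. -/
def AutSet {V : Type*} (q : SimpleGraph V) : Set (Equiv.Perm V) :=
  {g | ∀ u v, q.Adj u v ↔ q.Adj (g u) (g v)}

/-! An edge-induced match `m` of `p` is a vertex-induced match of the pullback `q = G.comap m`,
and `p ≤ q`. Either `p = q`, or `p < q` and `m = m ∘ id` with `id ∈ Φ(p, q)`. Conversely,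
composing a vertex-induced match of `q` with a subgraph isomorphism `p → q` preserves the
edges of `p`. -/

section

variable {V W : Type*}

theorem mem_edgeInduced_iff {p : SimpleGraph V} {G : SimpleGraph W} {m : V → W} :
    m ∈ EdgeInduced p G ↔ Function.Injective m ∧ p ≤ G.comap m :=
  Iff.rfl

theorem mem_vertexInduced_iff {p : SimpleGraph V} {G : SimpleGraph W} {m : V → W} :
    m ∈ VertexInduced p G ↔ Function.Injective m ∧ p = G.comap m := by
  simp only [VertexInduced, Set.mem_ofPred_eq, SimpleGraph.ext_iff, funext_iff, eq_iff_iff,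
    SimpleGraph.comap_adj]

theorem vertexInduced_subset_edgeInduced (p : SimpleGraph V) (G : SimpleGraph W) :
    VertexInduced p G ⊆ EdgeInduced p G :=
  fun _ ⟨hinj, hadj⟩ => ⟨hinj, fun u v h => (hadj u v).1 h⟩

theorem one_mem_subIso {p q : SimpleGraph V} (hpq : p ≤ q) : 1 ∈ SubIso p q :=
  fun _ _ h => hpq h

theorem compSet_vertexInduced_subIso_subset_edgeInduced (p q : SimpleGraph V)
    (G : SimpleGraph W) : CompSet (VertexInduced q G) (SubIso p q) ⊆ EdgeInduced p G := by
  rintro _ ⟨m, ⟨hinj, hadj⟩, f, hf, rfl⟩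
  exact ⟨hinj.comp f.injective, fun u v h => (hadj _ _).1 (hf u v h)⟩

end

theorem match_conversion_general {V W : Type*}
    (p : SimpleGraph V) (G : SimpleGraph W) :
    EdgeInduced p G =
      VertexInduced p G ∪
        ⋃ q ∈ {q : SimpleGraph V | p < q}, CompSet (VertexInduced q G) (SubIso p q) := by
  refine subset_antisymm (fun m hm => ?_) <| Set.union_subset
    (vertexInduced_subset_edgeInduced p G)
    (Set.iUnion₂_subset fun q _ => compSet_vertexInduced_subIso_subset_edgeInduced p q G)
  obtain ⟨hinj, hle⟩ := mem_edgeInduced_iff.1 hm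
  have hmq : m ∈ VertexInduced (G.comap m) G := mem_vertexInduced_iff.2 ⟨hinj, rfl⟩
  rcases hle.eq_or_lt with heq | hlt
  · exact Or.inl (mem_vertexInduced_iff.2 ⟨hinj, heq⟩)
  · exact Or.inr (Set.mem_biUnion hlt ⟨m, hmq, 1, one_mem_subIso hle, rfl⟩)

/-- **Match Conversion Theorem.** The edge-induced matches of `p` in `G` are the
vertex-induced matches of `p` together with, over all strict supergraphs `q` of `p`,
the permuted vertex-induced matches of `q`. -/
theorem match_conversion {V W : Type*} [Fintype V] [Fintype W]
    (p : SimpleGraph V) (G : SimpleGraph W) :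
    EdgeInduced p G =
      VertexInduced p G ∪
        ⋃ q ∈ {q : SimpleGraph V | p < q}, CompSet (VertexInduced q G) (SubIso p q) :=
  match_conversion_general p G
end

section
/- Let V and W be finite types, let p be a simple graph on V, let G be a simple graph on W, let A be a commutative additive monoid, and let λ be any function from maps V → W to A (the per-match aggregation value). Then the aggregation of λ over all edge-induced matches of p in G equals the sum, over all simple graphs q on V with p ≤ q, of the aggregation of λ over all vertex-induced matches of q in G: Σ_{m ∈ M_E(p,G)} λ(m) = Σ_{q : SimpleGraph V, p ≤ q} Σ_{m ∈ M_V(q,G)} λ(m). (Aggregation Conversion Theorem, labeled form.) -/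
/-! An injective map `m : V → W` is a vertex-induced match of exactly one graph on `V`, the
pullback `G.comap m`; it is edge-induced for `p` iff this pullback contains `p`. So the
vertex-induced match sets of the supergraphs of `p` partition the edge-induced matches of `p`. -/

section Matches

variable {V W : Type*} {p q : SimpleGraph V} {G : SimpleGraph W} {m : V → W}

theorem eq_comap_of_mem_vertexInduced (hm : m ∈ VertexInduced q G) : q = G.comap m :=
  SimpleGraph.ext <| funext₂ fun u v => propext (hm.2 u v)

theorem mem_vertexInduced_comap (hm : Function.Injective m) : m ∈ VertexInduced (G.comap m) G :=
  ⟨hm, fun _ _ => Iff.rfl⟩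

theorem pairwise_disjoint_vertexInduced :
    Pairwise (Function.onFun Disjoint fun q : SimpleGraph V => VertexInduced q G) := by
  intro q q' hne
  refine Set.disjoint_left.mpr fun m hq hq' => hne ?_
  rw [eq_comap_of_mem_vertexInduced hq, eq_comap_of_mem_vertexInduced hq']

theorem edgeInduced_eq_biUnion_vertexInduced :
    EdgeInduced p G = ⋃ q ∈ {q : SimpleGraph V | p ≤ q}, VertexInduced q G := by
  ext m
  simp only [Set.mem_iUnion, Set.mem_ofPred_eq, exists_prop]
  constructor
  · rintro ⟨hinj, hadj⟩
    exact ⟨G.comap m, fun u v huv => hadj u v huv, mem_vertexInduced_comap hinj⟩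
  · rintro ⟨q, hpq, hinj, hiff⟩
    exact ⟨hinj, fun u v huv => (hiff u v).mp (hpq huv)⟩

end Matches

/-- **Aggregation Conversion Theorem (labeled form).** Aggregating any function `lam`
over the edge-induced matches of `p` equals summing, over all supergraphs `q` of `p`,
the aggregation of `lam` over the vertex-induced matches of `q`. -/
theorem aggregation_conversion {V W : Type*} [Fintype V] [Fintype W]
    (p : SimpleGraph V) (G : SimpleGraph W)
    {A : Type*} [AddCommMonoid A] (lam : (V → W) → A) :
    ∑ᶠ m ∈ EdgeInduced p G, lam m =
      ∑ᶠ q ∈ {q : SimpleGraph V | p ≤ q}, ∑ᶠ m ∈ VertexInduced q G, lam m := by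
  rw [edgeInduced_eq_biUnion_vertexInduced,
    finsum_mem_biUnion (pairwise_disjoint_vertexInduced.set_pairwise _) (Set.toFinite _)
      fun q _ => Set.toFinite _]
end

section
/- Let V and W be finite types, let p and q be simple graphs on V, and let G be a simple graph on W. Then |M_V(q,G)| · |Φ(p,q)| = |Aut(q)| · |M_V(q,G) ∘ Φ(p,q)|, where M_V(q,G) ∘ Φ(p,q) denotes the set { m ∘ f | m ∈ M_V(q,G), f ∈ Φ(p,q) }. In particular, the map (m, f) ↦ m ∘ f from M_V(q,G) × Φ(p,q) onto its image has all fibers of cardinality |Aut(q)| (when Φ(p,q) is nonempty). -/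
open Function Set

theorem Set.ncard_eq_ncard_image_mul_of_fiber_equiv {α β γ : Type*} {s : Set α} {f : α → β}
    {t : Set γ} (h : ∀ y ∈ f '' s, Nonempty ({a ∈ s | f a = y} ≃ t)) :
    s.ncard = (f '' s).ncard * t.ncard := by
  have fiberEquiv (y : f '' s) : {a : s // imageFactorization f s a = y} ≃ t := by
    refine Equiv.trans ?_ (h y y.2).some
    exact
      { toFun a := ⟨a.1.1, a.1.2, congrArg Subtype.val a.2⟩
        invFun a := ⟨⟨a.1, a.2.1⟩, Subtype.ext a.2.2⟩
        left_inv _ := rfl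
        right_inv _ := rfl }
  exact (Nat.card_congr <| (Equiv.sigmaFiberEquiv (imageFactorization f s)).symm.trans
    (Equiv.sigmaEquivProdOfEquiv fiberEquiv)).trans (Nat.card_prod _ _)

section Matches

variable {V W : Type*} {p q : SimpleGraph V} {G : SimpleGraph W}

theorem inv_mem_autSet {g : Equiv.Perm V} (hg : g ∈ AutSet q) : g⁻¹ ∈ AutSet q := fun u v => by
  simpa using (hg (g⁻¹ u) (g⁻¹ v)).symm

theorem mul_mem_subIso {g f : Equiv.Perm V} (hg : g ∈ AutSet q) (hf : f ∈ SubIso p q) :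
    g * f ∈ SubIso p q :=
  fun u v huv => (hg _ _).1 (hf u v huv)

theorem comp_mem_vertexInduced {m : V → W} {g : Equiv.Perm V} (hm : m ∈ VertexInduced q G)
    (hg : g ∈ AutSet q) : m ∘ g ∈ VertexInduced q G :=
  ⟨hm.1.comp g.injective, fun u v => (hg u v).trans (hm.2 _ _)⟩

theorem mem_autSet_of_comp_mem_vertexInduced {m : V → W} {g : Equiv.Perm V}
    (hm : m ∈ VertexInduced q G) (hmg : m ∘ g ∈ VertexInduced q G) : g ∈ AutSet q :=
  fun u v => (hmg.2 u v).trans (hm.2 _ _).symm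

theorem compSet_eq_image_prod (M : Set (V → W)) (F : Set (Equiv.Perm V)) :
    CompSet M F = (fun mf : (V → W) × Equiv.Perm V => mf.1 ∘ mf.2) '' M ×ˢ F := by
  ext x
  simp [CompSet, eq_comm, and_assoc]

theorem compFiber_eq_image {m₀ : V → W} {f₀ : Equiv.Perm V} (hm₀ : m₀ ∈ VertexInduced q G)
    (hf₀ : f₀ ∈ SubIso p q) :
    {mf ∈ VertexInduced q G ×ˢ SubIso p q | mf.1 ∘ mf.2 = m₀ ∘ f₀} =
      (fun g : Equiv.Perm V => (m₀ ∘ ⇑g⁻¹, g * f₀)) '' AutSet q := by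
  ext ⟨m, f⟩
  constructor
  · rintro ⟨⟨hm, -⟩, hcomp⟩
    have hmg : m ∘ ⇑(f * f₀⁻¹) = m₀ := funext fun v => by
      simpa using congrFun hcomp (f₀⁻¹ v)
    refine ⟨f * f₀⁻¹, mem_autSet_of_comp_mem_vertexInduced hm (hmg ▸ hm₀), ?_⟩
    simp only [← hmg, comp_assoc, ← Equiv.Perm.coe_mul, mul_inv_cancel, Equiv.Perm.coe_one, comp_id,
      inv_mul_cancel_right]
  · rintro ⟨g, hg, hgmf⟩
    obtain ⟨rfl, rfl⟩ := Prod.mk.inj hgmf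
    refine ⟨⟨comp_mem_vertexInduced hm₀ (inv_mem_autSet hg), mul_mem_subIso hg hf₀⟩, ?_⟩
    funext v
    simp

theorem nonempty_compFiber_equiv_autSet {x : V → W}
    (hx : x ∈ CompSet (VertexInduced q G) (SubIso p q)) :
    Nonempty ({mf ∈ VertexInduced q G ×ˢ SubIso p q | mf.1 ∘ mf.2 = x} ≃ AutSet q) := by
  obtain ⟨m₀, hm₀, f₀, hf₀, rfl⟩ := hx
  have hinj : Injective fun g : Equiv.Perm V => (m₀ ∘ ⇑g⁻¹, g * f₀) :=
    fun g₁ g₂ h => mul_right_cancel (congrArg Prod.snd h)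
  exact ⟨(Equiv.setCongr (compFiber_eq_image hm₀ hf₀)).trans (Equiv.Set.image _ _ hinj).symm⟩

end Matches

theorem card_compSet_mul_aut_general {V W : Type*}
    (p q : SimpleGraph V) (G : SimpleGraph W) :
    (VertexInduced q G).ncard * (SubIso p q).ncard =
        (AutSet q).ncard * (CompSet (VertexInduced q G) (SubIso p q)).ncard ∧
      ((SubIso p q).Nonempty →
        ∀ x ∈ CompSet (VertexInduced q G) (SubIso p q),
          {mf : (V → W) × Equiv.Perm V |
              mf.1 ∈ VertexInduced q G ∧ mf.2 ∈ SubIso p q ∧ mf.1 ∘ mf.2 = x}.ncard =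
            (AutSet q).ncard) := by
  refine ⟨?_, fun _ x hx => ?_⟩
  · rw [← ncard_prod, mul_comm, compSet_eq_image_prod]
    exact ncard_eq_ncard_image_mul_of_fiber_equiv fun x hx =>
      nonempty_compFiber_equiv_autSet (compSet_eq_image_prod _ _ ▸ hx)
  · have hfiber : {mf : (V → W) × Equiv.Perm V |
        mf.1 ∈ VertexInduced q G ∧ mf.2 ∈ SubIso p q ∧ mf.1 ∘ mf.2 = x} =
        {mf ∈ VertexInduced q G ×ˢ SubIso p q | mf.1 ∘ mf.2 = x} :=
      Set.ext fun _ => and_assoc.symm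
    rw [hfiber]
    exact Nat.card_congr (nonempty_compFiber_equiv_autSet hx).some

/-- Counting with multiplicity: `|M_V(q,G)| · |Φ(p,q)| = |Aut(q)| · |M_V(q,G) ∘ Φ(p,q)|`,
and (when `Φ(p,q)` is nonempty) every fiber of `(m, f) ↦ m ∘ f` over the image set
`M_V(q,G) ∘ Φ(p,q)` has cardinality `|Aut(q)|`. -/
theorem card_compSet_mul_aut {V W : Type*} [Fintype V] [Fintype W]
    (p q : SimpleGraph V) (G : SimpleGraph W) :
    (VertexInduced q G).ncard * (SubIso p q).ncard =
        (AutSet q).ncard * (CompSet (VertexInduced q G) (SubIso p q)).ncard ∧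
      ((SubIso p q).Nonempty →
        ∀ x ∈ CompSet (VertexInduced q G) (SubIso p q),
          {mf : (V → W) × Equiv.Perm V |
              mf.1 ∈ VertexInduced q G ∧ mf.2 ∈ SubIso p q ∧ mf.1 ∘ mf.2 = x}.ncard =
            (AutSet q).ncard) :=
  card_compSet_mul_aut_general p q G
end

section
/- Let V and W be finite types, let p be a simple graph on V, and let G be a simple graph on W. Then, as integers, |M_V(p,G)| = Σ_{q : SimpleGraph V, p ≤ q} (−1)^{|E(q)| − |E(p)|} · |M_E(q,G)|, where |E(q)| denotes the number of edges of q. (This is the closed form of the recursive substitution that expresses the matches of a vertex-induced pattern in terms of matches of edge-induced patterns.) -/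
/-! A map `m : V → W` is an edge-induced match of `q` iff it is injective and `q ≤ G.comap m`,
and a vertex-induced match of `p` iff it is injective and `p = G.comap m`. Counting both sides
map by map, an injective `m` contributes `∑_{p ≤ q ≤ G.comap m} (-1)^(|E(q)| - |E(p)|)` to the
right-hand side: the Möbius function of the Boolean lattice of edge sets, which vanishes unless
`p = G.comap m`. -/

open Finset

theorem Finset.sum_Icc_neg_one_pow_card_sub {α : Type*} [DecidableEq α] (s t : Finset α) :
    ∑ u ∈ Icc s t, (-1 : ℤ) ^ (#u - #s) = if s = t then 1 else 0 := by
  by_cases hst : s ⊆ t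
  · have hdisj : ∀ x ∈ (t \ s).powerset, Disjoint s x := fun x hx =>
      disjoint_of_subset_right (mem_powerset.1 hx) disjoint_sdiff
    rw [Icc_eq_image_powerset hst, sum_image fun x hx y hy hxy => by
      rw [← union_sdiff_cancel_left (hdisj x hx), hxy, union_sdiff_cancel_left (hdisj y hy)]]
    calc ∑ x ∈ (t \ s).powerset, (-1 : ℤ) ^ (#(s ∪ x) - #s)
        = ∑ x ∈ (t \ s).powerset, (-1 : ℤ) ^ #x := sum_congr rfl fun x hx => by
          rw [card_union_of_disjoint (hdisj x hx), Nat.add_sub_cancel_left]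
      _ = if s = t then 1 else 0 := by
          simp only [sum_powerset_neg_one_pow_card, sdiff_eq_empty_iff_subset]
          exact if_congr ⟨hst.antisymm, fun h => h ▸ subset_rfl⟩ rfl rfl
  · rw [Icc_eq_empty hst, sum_empty, if_neg fun h => hst h.le]

theorem Set.ncard_eq_sum_ite {α : Type*} [Fintype α] (s : Set α) [DecidablePred (· ∈ s)] :
    (s.ncard : ℤ) = ∑ a, if a ∈ s then 1 else 0 := by
  rw [sum_boole, ncard_eq_toFinset_card', filter_mem_univ_eq_toFinset]

namespace SimpleGraph

variable {V W : Type*}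

section Matches

variable {p : SimpleGraph V} {G : SimpleGraph W} {m : V → W}

theorem mem_edgeInduced_iff : m ∈ EdgeInduced p G ↔ Function.Injective m ∧ p ≤ G.comap m :=
  Iff.rfl

theorem mem_vertexInduced_iff : m ∈ VertexInduced p G ↔ Function.Injective m ∧ p = G.comap m :=
  and_congr_right' <| by simp [SimpleGraph.ext_iff, funext_iff]

end Matches

variable [Fintype V]

open scoped Classical

theorem image_edgeFinset_filter_le_le (p H : SimpleGraph V) :
    (univ.filter fun q => p ≤ q ∧ q ≤ H).image (fun q => q.edgeFinset) =
      Icc p.edgeFinset H.edgeFinset := by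
  ext u
  simp only [mem_image, mem_filter, mem_univ, true_and, mem_Icc]
  constructor
  · rintro ⟨q, ⟨hpq, hqH⟩, rfl⟩
    exact ⟨edgeFinset_mono hpq, edgeFinset_mono hqH⟩
  · rintro ⟨hpu, huH⟩
    have hu : (fromEdgeSet (u : Set (Sym2 V))).edgeSet = u := by
      rw [edgeSet_fromEdgeSet, sdiff_eq_left, ← Set.subset_compl_iff_disjoint_right]
      exact (coe_subset.2 huH).trans
        ((coe_edgeFinset H).trans_subset (edgeSet_subset_compl_diagSet H))
    refine ⟨fromEdgeSet u, ⟨?_, ?_⟩, coe_injective <| by rw [coe_edgeFinset, hu]⟩ <;>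
      rw [← edgeSet_subset_edgeSet, hu, ← coe_edgeFinset] <;> exact_mod_cast ‹_›

theorem sum_filter_le_le_neg_one_pow (p H : SimpleGraph V) :
    ∑ q with p ≤ q ∧ q ≤ H, (-1 : ℤ) ^ (q.edgeSet.ncard - p.edgeSet.ncard) =
      if p = H then 1 else 0 := by
  simp only [← coe_edgeFinset, Set.ncard_coe_finset]
  rw [← sum_image (f := fun u => (-1 : ℤ) ^ (#u - #p.edgeFinset))
    fun q _ r _ h => edgeFinset_inj.1 h, image_edgeFinset_filter_le_le,
    sum_Icc_neg_one_pow_card_sub]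
  exact if_congr edgeFinset_inj rfl rfl

theorem sum_neg_one_pow_mul_mem_edgeInduced (p : SimpleGraph V) (G : SimpleGraph W) (m : V → W) :
    ∑ q with p ≤ q, (-1 : ℤ) ^ (q.edgeSet.ncard - p.edgeSet.ncard) *
        (if m ∈ EdgeInduced q G then 1 else 0) =
      if m ∈ VertexInduced p G then 1 else 0 := by
  simp only [mem_edgeInduced_iff, mem_vertexInduced_iff, mul_ite, mul_one, mul_zero]
  by_cases hm : Function.Injective m
  · simp only [hm, true_and]
    rw [← sum_filter, filter_filter, sum_filter_le_le_neg_one_pow]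
  · simp only [hm, false_and, if_false, sum_const_zero]

end SimpleGraph

/-- Inclusion–exclusion closed form: the number of vertex-induced matches of `p` in `G`
equals the alternating sum over supergraphs `q` of `p` of the numbers of edge-induced
matches of `q`, with sign given by the number of extra edges of `q`. -/
theorem card_vertexInduced_alternating_sum {V W : Type*} [Fintype V] [Fintype W]
    (p : SimpleGraph V) (G : SimpleGraph W) :
    ((VertexInduced p G).ncard : ℤ) =
      ∑ᶠ q ∈ {q : SimpleGraph V | p ≤ q},
        (-1 : ℤ) ^ (q.edgeSet.ncard - p.edgeSet.ncard) * (EdgeInduced q G).ncard := by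
  classical
  rw [finsum_mem_eq_toFinset_sum, Set.toFinset_ofPred]
  simp only [Set.ncard_eq_sum_ite, mul_sum]
  rw [sum_comm]
  exact sum_congr rfl fun m _ => (SimpleGraph.sum_neg_one_pow_mul_mem_edgeInduced p G m).symm
end
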